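/- arXiv:0907.2572 — 2 statements merged into one kernel-verified Lean document; each statement's English description precedes it below -/
import Mathlib

section
/- Let θ, ρ > 0 and let μ be the probability measure on ℕ obtained by drawing T from Exp(1) and then drawing N from the Poisson distribution with mean (θ/ρ)·(1−e^{−ρT}). Then the variance of μ equals θ²/((1+ρ)²(1+2ρ)) + θ/(1+ρ). (Second claim of Proposition 5.6: the variance of the number of genes |𝒢_i∖𝒢_j| present in individual i but absent in individual j, where T ~ Exp(1) is the coalescence time of i and j.) -/
/-
Given `T`, the count is Poisson with intensity `Λ = (θ/ρ)(1 - e^{-ρT})`, so its first two moments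
are `E Λ` and `E[Λ (Λ + 1)]` (for a Poisson variable, `E[N f(N)] = λ E[f(N+1)]`). Both are linear
combinations of the Laplace transform `E e^{-cT} = 1/(1 + c)` of `T ~ Exp(1)`, giving
`E Λ = θ/(1+ρ)` and `E Λ² = 2θ²/((1+ρ)(1+2ρ))`; the variance is `E Λ + E Λ² - (E Λ)²`.
-/

open MeasureTheory ProbabilityTheory Real Set
open scoped NNReal

section Exponential

variable {r ρ : ℝ}

lemma expMeasure_eq_withDensity (r : ℝ) : expMeasure r = volume.withDensity (exponentialPDF r) :=
  rfl

lemma measurable_exponentialPDF (r : ℝ) : Measurable (exponentialPDF r) :=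
  (measurable_exponentialPDFReal r).ennreal_ofReal

lemma exponentialPDF_toReal_mul_exp (hr : 0 ≤ r) (c t : ℝ) :
    (exponentialPDF r t).toReal * exp (c * t) =
      (Ici 0).indicator (fun t ↦ r * exp ((c - r) * t)) t := by
  rcases lt_or_ge t 0 with ht | ht
  · simp [exponentialPDF_of_neg ht, ht]
  · rw [exponentialPDF_of_nonneg ht, ENNReal.toReal_ofReal (by positivity),
      indicator_of_mem (mem_Ici.2 ht), mul_assoc, ← exp_add]
    ring_nf

lemma integrable_exp_mul_expMeasure (hr : 0 < r) {c : ℝ} (hc : c < r) :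
    Integrable (fun t ↦ exp (c * t)) (expMeasure r) := by
  rw [expMeasure_eq_withDensity, integrable_withDensity_iff_integrable_smul'
    (measurable_exponentialPDF r) (ae_of_all _ fun _ ↦ ENNReal.ofReal_lt_top)]
  simp_rw [smul_eq_mul, exponentialPDF_toReal_mul_exp hr.le]
  rw [integrable_indicator_iff measurableSet_Ici, integrableOn_Ici_iff_integrableOn_Ioi]
  exact (integrableOn_exp_mul_Ioi (by linarith) 0).const_mul r

lemma integral_exp_mul_expMeasure (hr : 0 < r) {c : ℝ} (hc : c < r) :
    ∫ t, exp (c * t) ∂expMeasure r = r / (r - c) := by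
  rw [expMeasure_eq_withDensity, integral_withDensity_eq_integral_toReal_smul
    (measurable_exponentialPDF r) (ae_of_all _ fun _ ↦ ENNReal.ofReal_lt_top)]
  simp_rw [smul_eq_mul, exponentialPDF_toReal_mul_exp hr.le, integral_indicator measurableSet_Ici,
    integral_Ici_eq_integral_Ioi, integral_const_mul, integral_exp_mul_Ioi (sub_neg.2 hc)]
  rw [mul_zero, exp_zero, ← neg_sub, div_neg, neg_div, neg_neg, mul_one_div]

lemma ae_nonneg_expMeasure : ∀ᵐ t ∂expMeasure r, 0 ≤ t := by
  rw [expMeasure_eq_withDensity, ae_withDensity_iff (measurable_exponentialPDF r)]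
  exact ae_of_all _ fun t ht ↦ not_lt.1 fun h ↦ ht (exponentialPDF_of_neg h)

lemma integrable_one_sub_exp_expMeasure (hr : 0 < r) (hρ : -r < ρ) :
    Integrable (fun t ↦ 1 - exp (-ρ * t)) (expMeasure r) :=
  have := isProbabilityMeasure_expMeasure hr
  (integrable_const 1).sub (integrable_exp_mul_expMeasure hr (by linarith))

lemma integral_one_sub_exp_expMeasure (hr : 0 < r) (hρ : -r < ρ) :
    ∫ t, (1 - exp (-ρ * t)) ∂expMeasure r = ρ / (r + ρ) := by
  have := isProbabilityMeasure_expMeasure hr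
  rw [integral_sub (integrable_const 1) (integrable_exp_mul_expMeasure hr (by linarith)),
    integral_exp_mul_expMeasure hr (by linarith), integral_const, probReal_univ, one_smul]
  have : r + ρ ≠ 0 := by linarith
  simp only [sub_neg_eq_add]
  field_simp
  ring

lemma one_sub_exp_sq (ρ t : ℝ) :
    (1 - exp (-ρ * t)) ^ 2 = 1 - 2 * exp (-ρ * t) + exp (-(2 * ρ) * t) := by
  rw [show -(2 * ρ) * t = -ρ * t + -ρ * t by ring, exp_add]
  ring

lemma integrable_one_sub_exp_sq_expMeasure (hr : 0 < r) (hρ : -r < 2 * ρ) :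
    Integrable (fun t ↦ (1 - exp (-ρ * t)) ^ 2) (expMeasure r) := by
  have := isProbabilityMeasure_expMeasure hr
  simp_rw [one_sub_exp_sq]
  exact ((integrable_const 1).sub
    ((integrable_exp_mul_expMeasure hr (by linarith)).const_mul 2)).add
      (integrable_exp_mul_expMeasure hr (by linarith))

lemma integral_one_sub_exp_sq_expMeasure (hr : 0 < r) (hρ : -r < 2 * ρ) :
    ∫ t, (1 - exp (-ρ * t)) ^ 2 ∂expMeasure r = 2 * ρ ^ 2 / ((r + ρ) * (r + 2 * ρ)) := by
  have := isProbabilityMeasure_expMeasure hr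
  have h₁ := integrable_exp_mul_expMeasure hr (c := -ρ) (by linarith)
  have h₂ := integrable_exp_mul_expMeasure hr (c := -(2 * ρ)) (by linarith)
  simp_rw [one_sub_exp_sq]
  rw [integral_add (f := fun t ↦ 1 - 2 * exp (-ρ * t))
      ((integrable_const 1).sub (h₁.const_mul 2)) h₂,
    integral_sub (integrable_const 1) (h₁.const_mul 2), integral_const_mul,
    integral_exp_mul_expMeasure hr (by linarith), integral_exp_mul_expMeasure hr (by linarith),
    integral_const, probReal_univ, one_smul]
  have : r + ρ ≠ 0 := by linarith
  have : r + 2 * ρ ≠ 0 := by linarith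
  simp only [sub_neg_eq_add]
  field_simp
  ring

end Exponential

section Poisson

open scoped Nat

lemma hasSum_poisson_mul_natCast_mul (r : ℝ≥0) {f : ℕ → ℝ} {a : ℝ}
    (hf : HasSum (fun n ↦ exp (-r) * r ^ n / n ! * f (n + 1)) a) :
    HasSum (fun n ↦ exp (-r) * r ^ n / n ! * (n * f n)) (r * a) := by
  have shift (n : ℕ) : exp (-r) * r ^ (n + 1) / (n + 1)! * ((n + 1) * f (n + 1)) =
      r * (exp (-r) * r ^ n / n ! * f (n + 1)) := by
    rw [Nat.factorial_succ]
    push_cast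
    field_simp
    ring
  refine (hasSum_nat_add_iff' 1).1 ?_
  simpa [shift] using hf.mul_left (r : ℝ)

lemma hasSum_poisson_mul_natCast (r : ℝ≥0) :
    HasSum (fun n ↦ exp (-r) * r ^ n / n ! * n) r := by
  have h := hasSum_poisson_mul_natCast_mul r (f := 1) (by simpa using hasSum_one_poissonMeasure r)
  simpa using h

lemma hasSum_poisson_mul_natCast_sq (r : ℝ≥0) :
    HasSum (fun n ↦ exp (-r) * r ^ n / n ! * n ^ 2) (r * (r + 1)) := by
  have h := (hasSum_poisson_mul_natCast r).add (hasSum_one_poissonMeasure r)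
  simp_rw [← mul_add_one] at h
  simpa [sq] using hasSum_poisson_mul_natCast_mul r (f := Nat.cast) (by simpa using h)

lemma measurable_poissonMeasure : Measurable poissonMeasure := by
  refine Measure.measurable_of_measurable_coe _ fun s hs ↦ ?_
  simp_rw [← Measure.tsum_indicator_apply_singleton _ s hs, poissonMeasure_singleton]
  refine Measurable.tsum fun n ↦ ?_
  by_cases hn : n ∈ s
  · simp only [indicator_of_mem hn]
    fun_prop
  · simp [hn]

lemma lintegral_ofReal_poissonMeasure {g : ℕ → ℝ} (hg : 0 ≤ g) {r : ℝ≥0} {a : ℝ}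
    (h : HasSum (fun n ↦ exp (-r) * r ^ n / n ! * g n) a) :
    ∫⁻ n, ENNReal.ofReal (g n) ∂poissonMeasure r = ENNReal.ofReal a := by
  simp_rw [lintegral_countable', poissonMeasure_singleton, ← ENNReal.ofReal_mul (hg _),
    mul_comm (g _)]
  rw [← ENNReal.ofReal_tsum_of_nonneg (fun n ↦ mul_nonneg (by positivity) (hg n)) h.summable,
    h.tsum_eq]

lemma integral_bind_poissonMeasure {α : Type*} [MeasurableSpace α] {ν : Measure α}
    {Λ : α → ℝ≥0} (hΛ : Measurable Λ) {g : ℕ → ℝ} (hg : 0 ≤ g) {m : ℝ≥0 → ℝ} (hm : Measurable m)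
    (hgm : ∀ r : ℝ≥0, HasSum (fun n ↦ exp (-r) * r ^ n / n ! * g n) (m r)) :
    ∫ n, g n ∂ν.bind (fun t ↦ poissonMeasure (Λ t)) = ∫ t, m (Λ t) ∂ν := by
  -- no integrability is needed: both sides are `toReal` of the same lower integral
  have hm_nonneg (r : ℝ≥0) : 0 ≤ m r :=
    (hgm r).nonneg fun n ↦ mul_nonneg (by positivity) (hg n)
  rw [integral_eq_lintegral_of_nonneg_ae (ae_of_all _ hg)
      (measurable_of_countable g).aestronglyMeasurable,
    Measure.lintegral_bind (μ := fun t ↦ poissonMeasure (Λ t))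
      (measurable_poissonMeasure.comp hΛ).aemeasurable
      (measurable_of_countable _).aemeasurable,
    integral_eq_lintegral_of_nonneg_ae (ae_of_all _ fun t ↦ hm_nonneg (Λ t))
      (hm.comp hΛ).aestronglyMeasurable]
  simp_rw [lintegral_ofReal_poissonMeasure hg (hgm _)]

end Poisson

noncomputable def poissonExpMixture (r a ρ : ℝ) : Measure ℕ :=
  (expMeasure r).bind fun t ↦ poissonMeasure ((a * (1 - exp (-ρ * t))).toNNReal)

section PoissonExpMixture

variable {r a ρ : ℝ}

lemma coe_toNNReal_mul_one_sub_exp_ae_eq (ha : 0 ≤ a) (hρ : 0 ≤ ρ) :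
    (fun t ↦ ((a * (1 - exp (-ρ * t))).toNNReal : ℝ)) =ᵐ[expMeasure r]
      fun t ↦ a * (1 - exp (-ρ * t)) := by
  filter_upwards [ae_nonneg_expMeasure] with t ht
  have : exp (-ρ * t) ≤ 1 := exp_le_one_iff.2 (by nlinarith)
  exact Real.coe_toNNReal _ (mul_nonneg ha (by linarith))

lemma integral_natCast_poissonExpMixture (hr : 0 < r) (ha : 0 ≤ a) (hρ : 0 ≤ ρ) :
    ∫ n : ℕ, (n : ℝ) ∂poissonExpMixture r a ρ = a * (ρ / (r + ρ)) := by
  rw [poissonExpMixture, integral_bind_poissonMeasure (by fun_prop)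
    (fun n ↦ n.cast_nonneg) measurable_coe_nnreal_real hasSum_poisson_mul_natCast,
    integral_congr_ae (coe_toNNReal_mul_one_sub_exp_ae_eq ha hρ), integral_const_mul,
    integral_one_sub_exp_expMeasure hr (by linarith)]

lemma integral_natCast_sq_poissonExpMixture (hr : 0 < r) (ha : 0 ≤ a) (hρ : 0 ≤ ρ) :
    ∫ n : ℕ, (n : ℝ) ^ 2 ∂poissonExpMixture r a ρ =
      a ^ 2 * (2 * ρ ^ 2 / ((r + ρ) * (r + 2 * ρ))) + a * (ρ / (r + ρ)) := by
  rw [poissonExpMixture, integral_bind_poissonMeasure (by fun_prop)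
    (fun n ↦ sq_nonneg _) (by fun_prop) hasSum_poisson_mul_natCast_sq]
  calc ∫ t, ((a * (1 - exp (-ρ * t))).toNNReal : ℝ) * ((a * (1 - exp (-ρ * t))).toNNReal + 1)
        ∂expMeasure r
      = ∫ t, (a ^ 2 * (1 - exp (-ρ * t)) ^ 2 + a * (1 - exp (-ρ * t))) ∂expMeasure r := by
        refine integral_congr_ae ?_
        filter_upwards [coe_toNNReal_mul_one_sub_exp_ae_eq ha hρ] with t ht
        rw [ht]
        ring
    _ = a ^ 2 * (2 * ρ ^ 2 / ((r + ρ) * (r + 2 * ρ))) + a * (ρ / (r + ρ)) := by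
        rw [integral_add ((integrable_one_sub_exp_sq_expMeasure hr (by linarith)).const_mul _)
          ((integrable_one_sub_exp_expMeasure hr (by linarith)).const_mul _),
          integral_const_mul, integral_const_mul,
          integral_one_sub_exp_sq_expMeasure hr (by linarith),
          integral_one_sub_exp_expMeasure hr (by linarith)]

end PoissonExpMixture

/-- Second claim of Proposition 5.6: if `T ~ Exp(1)` and, given `T`,
`N ~ Poisson((θ/ρ)(1 - e^{-ρT}))`, then the variance of `N` equals
`θ²/((1+ρ)²(1+2ρ)) + θ/(1+ρ)`.  This is the variance of the number of genes
`|𝒢ᵢ ∖ 𝒢ⱼ|` present in individual `i` but absent in individual `j`. -/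
theorem variance_pairwise_difference (θ ρ : ℝ) (hθ : 0 < θ) (hρ : 0 < ρ)
    (μ : Measure ℕ)
    (hμ : μ = (expMeasure 1).bind (fun t =>
      poissonMeasure ((θ / ρ * (1 - Real.exp (-ρ * t))).toNNReal))) :
    (∫ n : ℕ, (n : ℝ) ^ 2 ∂μ) - (∫ n : ℕ, (n : ℝ) ∂μ) ^ 2 =
      θ ^ 2 / ((1 + ρ) ^ 2 * (1 + 2 * ρ)) + θ / (1 + ρ) := by
  change μ = poissonExpMixture 1 (θ / ρ) ρ at hμ
  subst hμ
  have ha : 0 ≤ θ / ρ := by positivity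
  rw [integral_natCast_sq_poissonExpMixture one_pos ha hρ.le,
    integral_natCast_poissonExpMixture one_pos ha hρ.le]
  field_simp
  ring
end

section
/- Let θ, ρ > 0 and let ν be the probability measure on ℕ × ℕ obtained by drawing T from Exp(1) and then drawing (Y, Z) as a pair of independent random variables, each Poisson distributed with mean (θ/ρ)·(1−e^{−ρT}). Then the covariance of the two coordinates under ν equals θ²/((1+ρ)²(1+2ρ)). (Third claim of Proposition 5.6: COV[|𝒢_i∖𝒢_j|, |𝒢_j∖𝒢_i|] = θ²/((1+ρ)²(1+2ρ)), since given the coalescence time T of individuals i and j the two private gene counts are independent Poisson with the same random mean.) -/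
/-!
Given `T`, the two counts are independent Poisson variables with the common mean
`m(T) = (θ/ρ)(1 - e^{-ρT})`, so `E[YZ] = E[m(T)²]` and `E[Y] = E[Z] = E[m(T)]`: the covariance
of the mixture is the variance of `m(T)`. Both moments of `m(T)` follow from the Laplace transform
`E[e^{-cT}] = 1/(1+c)` of `Exp(1)`.
-/

open MeasureTheory ProbabilityTheory
open scoped ENNReal NNReal Nat
open Real Set

namespace ProbabilityTheory

lemma hasSum_natCast_mul_poisson (r : ℝ≥0) :
    HasSum (fun n : ℕ => n * (exp (-r) * r ^ n / n !)) r := by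
  have h := (hasSum_one_poissonMeasure r).mul_left (r : ℝ)
  rw [mul_one] at h
  rw [← hasSum_nat_add_iff' 1, Finset.sum_range_one, Nat.cast_zero, zero_mul, sub_zero]
  refine h.congr_fun fun n => ?_
  rw [Nat.factorial_succ, pow_succ]
  push_cast
  field_simp

lemma lintegral_natCast_poissonMeasure (r : ℝ≥0) :
    ∫⁻ n, (n : ℝ≥0∞) ∂poissonMeasure r = r := by
  have hs := hasSum_natCast_mul_poisson r
  rw [lintegral_countable', ← ENNReal.ofReal_coe_nnreal, ← hs.tsum_eq,
    ENNReal.ofReal_tsum_of_nonneg (fun n => by positivity) hs.summable]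
  refine tsum_congr fun n => ?_
  rw [poissonMeasure_singleton, ENNReal.ofReal_mul n.cast_nonneg, ENNReal.ofReal_natCast]

lemma measurable_poissonMeasure : Measurable poissonMeasure := by
  refine Measure.measurable_of_measurable_coe _ fun s hs => ?_
  simp only [poissonMeasure, Measure.sum_apply _ hs, Measure.smul_apply, smul_eq_mul]
  exact Measurable.tsum fun n => by fun_prop

noncomputable def poissonPairMixture {α : Type*} [MeasurableSpace α] (μ : Measure α)
    (g₁ g₂ : α → ℝ≥0) : Measure (ℕ × ℕ) :=
  μ.bind fun t => (poissonMeasure (g₁ t)).prod (poissonMeasure (g₂ t))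

section PoissonPairMixture

variable {α : Type*} [MeasurableSpace α] {μ : Measure α} {g₁ g₂ : α → ℝ≥0}

lemma measurable_poissonMeasure_prod (hg₁ : Measurable g₁) (hg₂ : Measurable g₂) :
    Measurable fun t => (poissonMeasure (g₁ t)).prod (poissonMeasure (g₂ t)) := by
  let κ₁ : Kernel α ℕ := ⟨_, measurable_poissonMeasure.comp hg₁⟩
  let κ₂ : Kernel α ℕ := ⟨_, measurable_poissonMeasure.comp hg₂⟩
  have : IsMarkovKernel κ₁ := ⟨fun _ => inferInstanceAs (IsProbabilityMeasure (poissonMeasure _))⟩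
  have : IsMarkovKernel κ₂ := ⟨fun _ => inferInstanceAs (IsProbabilityMeasure (poissonMeasure _))⟩
  convert (κ₁ ×ₖ κ₂).measurable with t
  exact (Kernel.prod_apply κ₁ κ₂ t).symm

lemma lintegral_poissonPairMixture (hg₁ : Measurable g₁) (hg₂ : Measurable g₂)
    (f₁ f₂ : ℕ → ℝ≥0∞) :
    ∫⁻ q, f₁ q.1 * f₂ q.2 ∂poissonPairMixture μ g₁ g₂ =
      ∫⁻ t, (∫⁻ n, f₁ n ∂poissonMeasure (g₁ t)) * ∫⁻ n, f₂ n ∂poissonMeasure (g₂ t) ∂μ := by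
  rw [poissonPairMixture, Measure.lintegral_bind
    (measurable_poissonMeasure_prod hg₁ hg₂).aemeasurable (measurable_of_countable _).aemeasurable]
  exact lintegral_congr fun t => lintegral_prod_mul (measurable_of_countable _).aemeasurable
    (measurable_of_countable _).aemeasurable

lemma integral_natCast_mul_poissonPairMixture (hg₁ : Measurable g₁) (hg₂ : Measurable g₂) :
    ∫ q, (q.1 : ℝ) * q.2 ∂poissonPairMixture μ g₁ g₂ = ∫ t, (g₁ t : ℝ) * g₂ t ∂μ := by
  rw [integral_eq_lintegral_of_nonneg_ae (ae_of_all _ fun q => by positivity) (by fun_prop),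
    integral_eq_lintegral_of_nonneg_ae (ae_of_all _ fun t => by positivity) (by fun_prop)]
  simp only [ENNReal.ofReal_mul (Nat.cast_nonneg _), ENNReal.ofReal_natCast,
    lintegral_poissonPairMixture hg₁ hg₂, lintegral_natCast_poissonMeasure,
    ENNReal.ofReal_mul NNReal.zero_le_coe, ENNReal.ofReal_coe_nnreal]

lemma integral_natCast_fst_poissonPairMixture (hg₁ : Measurable g₁) (hg₂ : Measurable g₂) :
    ∫ q, (q.1 : ℝ) ∂poissonPairMixture μ g₁ g₂ = ∫ t, (g₁ t : ℝ) ∂μ := by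
  rw [integral_eq_lintegral_of_nonneg_ae (ae_of_all _ fun q => by positivity) (by fun_prop),
    integral_eq_lintegral_of_nonneg_ae (ae_of_all _ fun t => by positivity) (by fun_prop)]
  have h := lintegral_poissonPairMixture (μ := μ) hg₁ hg₂ (fun n => n) 1
  simp only [Pi.one_apply, mul_one, lintegral_const, measure_univ] at h
  simp only [ENNReal.ofReal_natCast, h, lintegral_natCast_poissonMeasure,
    ENNReal.ofReal_coe_nnreal]

lemma integral_natCast_snd_poissonPairMixture (hg₁ : Measurable g₁) (hg₂ : Measurable g₂) :
    ∫ q, (q.2 : ℝ) ∂poissonPairMixture μ g₁ g₂ = ∫ t, (g₂ t : ℝ) ∂μ := by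
  rw [integral_eq_lintegral_of_nonneg_ae (ae_of_all _ fun q => by positivity) (by fun_prop),
    integral_eq_lintegral_of_nonneg_ae (ae_of_all _ fun t => by positivity) (by fun_prop)]
  have h := lintegral_poissonPairMixture (μ := μ) hg₁ hg₂ 1 (fun n => n)
  simp only [Pi.one_apply, one_mul, lintegral_const, measure_univ] at h
  simp only [ENNReal.ofReal_natCast, h, lintegral_natCast_poissonMeasure,
    ENNReal.ofReal_coe_nnreal]

lemma covariance_poissonPairMixture (hg₁ : Measurable g₁) (hg₂ : Measurable g₂) :
    (∫ q, (q.1 : ℝ) * q.2 ∂poissonPairMixture μ g₁ g₂) -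
        (∫ q, (q.1 : ℝ) ∂poissonPairMixture μ g₁ g₂) *
          ∫ q, (q.2 : ℝ) ∂poissonPairMixture μ g₁ g₂ =
      (∫ t, (g₁ t : ℝ) * g₂ t ∂μ) - (∫ t, (g₁ t : ℝ) ∂μ) * ∫ t, (g₂ t : ℝ) ∂μ := by
  rw [integral_natCast_mul_poissonPairMixture hg₁ hg₂,
    integral_natCast_fst_poissonPairMixture hg₁ hg₂,
    integral_natCast_snd_poissonPairMixture hg₁ hg₂]

end PoissonPairMixture

section ExpMeasure

lemma measurable_gammaPDF (a r : ℝ) : Measurable (gammaPDF a r) :=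
  (measurable_gammaPDFReal a r).ennreal_ofReal

lemma ae_nonneg_expMeasure (r : ℝ) : ∀ᵐ t ∂expMeasure r, 0 ≤ t := by
  rw [expMeasure, gammaMeasure, ae_withDensity_iff (measurable_gammaPDF 1 r)]
  exact ae_of_all _ fun t ht => not_lt.mp fun h => ht (gammaPDF_of_neg h)

variable {r c : ℝ}

lemma integral_expMeasure (hr : 0 ≤ r) (f : ℝ → ℝ) :
    ∫ t, f t ∂expMeasure r = ∫ t in Ici 0, r * exp (-(r * t)) * f t := by
  rw [expMeasure, gammaMeasure, integral_withDensity_eq_integral_toReal_smul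
    (measurable_gammaPDF 1 r) (ae_of_all _ fun _ => ENNReal.ofReal_lt_top),
    ← integral_indicator measurableSet_Ici]
  congr 1 with t
  by_cases ht : 0 ≤ t
  · have hpdf : 0 ≤ r * exp (-(r * t)) := by positivity
    simp [gammaPDF_of_nonneg ht, ht, ENNReal.toReal_ofReal hpdf]
  · simp [gammaPDF_of_neg (not_le.mp ht), ht]

lemma integral_exp_neg_mul_expMeasure (hr : 0 ≤ r) (hrc : 0 < r + c) :
    ∫ t, exp (-c * t) ∂expMeasure r = r / (r + c) := by
  have h := integral_exp_mul_Ioi (neg_neg_of_pos hrc) 0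
  rw [mul_zero, exp_zero] at h
  rw [integral_expMeasure hr, integral_Ici_eq_integral_Ioi]
  simp_rw [mul_assoc, ← exp_add, integral_const_mul, neg_mul, ← neg_add, ← add_mul, ← neg_mul, h]
  field_simp

lemma integrable_exp_neg_mul_expMeasure (hr : 0 < r) (hc : 0 ≤ c) :
    Integrable (fun t => exp (-c * t)) (expMeasure r) := by
  have := isProbabilityMeasure_expMeasure hr
  refine Integrable.of_bound (by fun_prop) 1 ((ae_nonneg_expMeasure r).mono fun t ht => ?_)
  rw [Real.norm_of_nonneg (exp_pos _).le, exp_le_one_iff, neg_mul, neg_nonpos]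
  positivity

lemma integral_one_sub_exp_neg_mul_expMeasure (hr : 0 < r) (hc : 0 ≤ c) :
    ∫ t, (1 - exp (-c * t)) ∂expMeasure r = c / (r + c) := by
  have := isProbabilityMeasure_expMeasure hr
  rw [integral_sub (integrable_const 1) (integrable_exp_neg_mul_expMeasure hr hc),
    integral_exp_neg_mul_expMeasure hr.le (by linarith), integral_const, probReal_univ, one_smul]
  field_simp
  ring

lemma integral_one_sub_exp_neg_mul_sq_expMeasure (hr : 0 < r) (hc : 0 ≤ c) :
    ∫ t, (1 - exp (-c * t)) ^ 2 ∂expMeasure r = 2 * c ^ 2 / ((r + c) * (r + 2 * c)) := by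
  have := isProbabilityMeasure_expMeasure hr
  have hsq (t : ℝ) : (1 - exp (-c * t)) ^ 2 = 1 - 2 * exp (-c * t) + exp (-(2 * c) * t) := by
    rw [sub_sq, mul_one, one_pow, ← exp_nat_mul]
    ring_nf
  have hint : Integrable (fun t => 1 - 2 * exp (-c * t)) (expMeasure r) :=
    (integrable_const 1).sub ((integrable_exp_neg_mul_expMeasure hr hc).const_mul 2)
  simp_rw [hsq]
  rw [integral_add hint (integrable_exp_neg_mul_expMeasure hr (by positivity)),
    integral_sub (integrable_const 1) ((integrable_exp_neg_mul_expMeasure hr hc).const_mul 2),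
    integral_const_mul, integral_exp_neg_mul_expMeasure hr.le (by linarith),
    integral_exp_neg_mul_expMeasure hr.le (by linarith), integral_const, probReal_univ, one_smul]
  field_simp
  ring

end ExpMeasure

end ProbabilityTheory

/-- Third claim of Proposition 5.6: if `T ~ Exp(1)` and, given `T`, `(Y, Z)` is a pair
of independent Poisson random variables, each with mean `(θ/ρ)(1 - e^{-ρT})`, then
`COV[Y, Z] = θ²/((1+ρ)²(1+2ρ))`.  This is the covariance of the two private gene
counts `|𝒢ᵢ ∖ 𝒢ⱼ|` and `|𝒢ⱼ ∖ 𝒢ᵢ|`. -/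
theorem covariance_private_genes (θ ρ : ℝ) (hθ : 0 < θ) (hρ : 0 < ρ)
    (ν : Measure (ℕ × ℕ))
    (hν : ν = (expMeasure 1).bind (fun t =>
      (poissonMeasure ((θ / ρ * (1 - Real.exp (-ρ * t))).toNNReal)).prod
        (poissonMeasure ((θ / ρ * (1 - Real.exp (-ρ * t))).toNNReal)))) :
    (∫ q : ℕ × ℕ, (q.1 : ℝ) * (q.2 : ℝ) ∂ν) -
      (∫ q : ℕ × ℕ, (q.1 : ℝ) ∂ν) * (∫ q : ℕ × ℕ, (q.2 : ℝ) ∂ν) =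
      θ ^ 2 / ((1 + ρ) ^ 2 * (1 + 2 * ρ)) := by
  set m : ℝ → ℝ := fun t => θ / ρ * (1 - exp (-ρ * t))
  have hm : Measurable fun t => (m t).toNNReal := by fun_prop
  have hm_coe : (fun t => ((m t).toNNReal : ℝ)) =ᵐ[expMeasure 1] m :=
    (ae_nonneg_expMeasure 1).mono fun t ht => Real.coe_toNNReal _ <| mul_nonneg (by positivity) <|
      sub_nonneg.mpr <| exp_le_one_iff.mpr <| by nlinarith
  have hm_coe_mul : (fun t => ((m t).toNNReal : ℝ) * (m t).toNNReal) =ᵐ[expMeasure 1]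
      fun t => m t * m t := hm_coe.mul hm_coe
  have hm_sq (t : ℝ) : m t * m t = (θ / ρ) ^ 2 * (1 - exp (-ρ * t)) ^ 2 := by ring
  rw [show ν = poissonPairMixture (expMeasure 1) _ _ from hν, covariance_poissonPairMixture hm hm,
    integral_congr_ae hm_coe, integral_congr_ae hm_coe_mul]
  simp only [hm_sq, m, integral_const_mul,
    integral_one_sub_exp_neg_mul_expMeasure one_pos hρ.le,
    integral_one_sub_exp_neg_mul_sq_expMeasure one_pos hρ.le]
  field_simp
  ring
end
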